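/- arXiv:2110.08720 — 2 statements merged into one kernel-verified Lean document; each statement's English description precedes it below -/
import Mathlib

section
/- Let ρ be a probability measure on ℝ^d with finite second moment, and θ₁,…,θ_m distinct points. Define, for each j, ṽ_j = ρ({x : ‖θ_j − x‖ ≤ ‖θ_k − x‖ for all k}) using any fixed tie-breaking rule that assigns each x to exactly one nearest index, and v_j = ṽ_j (so ∑ v_j = 1). Then W₂²(∑_j v_j δ_{θ_j}, ρ) = E_{X∼ρ}[min_j ‖θ_j − X‖²], i.e., the nearest-neighbor weights achieve the optimal weights. -/
/-!
Push `ρ` forward along `x ↦ (θ (c x), x)`. This coupling has first marginal `∑ⱼ vⱼ δ_{θⱼ}` and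
transports every `x` to a nearest centre, so its cost is `E[minⱼ ‖θⱼ - X‖²]`. Conversely, any
coupling with that first marginal moves almost every point to some `θⱼ`, which costs at least the
squared distance to the nearest centre.
-/

open MeasureTheory

/-- Squared 2-Wasserstein distance on `ℝ^d` (Euclidean). -/
noncomputable def W2sq {d : ℕ}
    (μ ρ : Measure (EuclideanSpace ℝ (Fin d))) : ℝ :=
  sInf { c : ℝ |
    ∃ γ : Measure (EuclideanSpace ℝ (Fin d) × EuclideanSpace ℝ (Fin d)),
      γ.map Prod.fst = μ ∧ γ.map Prod.snd = ρ ∧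
      c = ∫ p, ‖p.1 - p.2‖ ^ 2 ∂γ }

/-- The discrete measure `∑ j v_j δ_{θ_j}`. -/
noncomputable def discMeasure {d m : ℕ} (v : Fin m → ℝ)
    (θ : Fin m → EuclideanSpace ℝ (Fin d)) :
    Measure (EuclideanSpace ℝ (Fin d)) :=
  ∑ j, ENNReal.ofReal (v j) • Measure.dirac (θ j)

open Set

section MinSqDist

variable {ι E : Type*} [NormedAddCommGroup E]

noncomputable def minSqDist (θ : ι → E) (x : E) : ℝ := ⨅ j, ‖θ j - x‖ ^ 2

theorem minSqDist_nonneg (θ : ι → E) (x : E) : 0 ≤ minSqDist θ x :=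
  Real.iInf_nonneg fun _ => by positivity

variable [Finite ι]

theorem minSqDist_le (θ : ι → E) (x : E) (j : ι) : minSqDist θ x ≤ ‖θ j - x‖ ^ 2 :=
  ciInf_le (finite_range _).bddBelow j

theorem minSqDist_eq_of_forall_le {θ : ι → E} {x : E} {i : ι}
    (h : ∀ k, ‖θ i - x‖ ≤ ‖θ k - x‖) : minSqDist θ x = ‖θ i - x‖ ^ 2 :=
  have : Nonempty ι := ⟨i⟩
  (minSqDist_le θ x i).antisymm (le_ciInf fun k => pow_le_pow_left₀ (norm_nonneg _) (h k) 2)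

variable [MeasurableSpace E] [BorelSpace E]

theorem measurable_minSqDist (θ : ι → E) : Measurable (minSqDist θ) :=
  Measurable.iInf fun j => by fun_prop

variable [SecondCountableTopology E]

theorem integral_minSqDist_le_integral_norm_sub_sq (θ : ι → E) {ρ : Measure E} [IsFiniteMeasure ρ]
    (hρ : MemLp id 2 ρ) {γ : Measure (E × E)} (hsnd : γ.map Prod.snd = ρ)
    (hfst : ∀ᵐ p ∂γ, p.1 ∈ range θ) :
    ∫ x, minSqDist θ x ∂ρ ≤ ∫ p, ‖p.1 - p.2‖ ^ 2 ∂γ := by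
  subst hsnd
  have : IsFiniteMeasure γ := Measure.isFiniteMeasure_of_map measurable_snd.aemeasurable
  obtain ⟨C, hC⟩ := Finite.exists_le fun j => ‖θ j‖
  have hfst_memLp : MemLp Prod.fst 2 γ :=
    MemLp.of_bound measurable_fst.aestronglyMeasurable C
      (hfst.mono fun p ⟨j, hj⟩ => hj ▸ hC j)
  have hsnd_memLp : MemLp Prod.snd 2 γ :=
    (memLp_map_measure_iff aestronglyMeasurable_id measurable_snd.aemeasurable).1 hρ
  have hcost : Integrable (fun p : E × E => ‖p.1 - p.2‖ ^ 2) γ :=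
    (hfst_memLp.sub hsnd_memLp).integrable_norm_pow two_ne_zero
  rw [integral_map measurable_snd.aemeasurable (measurable_minSqDist θ).aestronglyMeasurable]
  refine integral_mono_of_nonneg (ae_of_all _ fun p => minSqDist_nonneg θ p.2) hcost ?_
  filter_upwards [hfst] with p ⟨j, hj⟩
  exact hj ▸ minSqDist_le θ p.2 j

end MinSqDist

section DiscreteMeasure

variable {d m : ℕ}

theorem discMeasure_eq_map (v : Fin m → ℝ) (θ : Fin m → EuclideanSpace ℝ (Fin d)) :
    discMeasure v θ = (∑ j, ENNReal.ofReal (v j) • Measure.dirac j).map θ := by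
  rw [Measure.map_finset_sum' (measurable_of_countable θ).aemeasurable]
  simp_rw [Measure.map_smul, Measure.map_dirac' (measurable_of_countable θ)]
  rfl

theorem ae_mem_range_discMeasure (v : Fin m → ℝ) (θ : Fin m → EuclideanSpace ℝ (Fin d)) :
    ∀ᵐ y ∂discMeasure v θ, y ∈ range θ := by
  rw [discMeasure_eq_map]
  exact ae_map_mem_range θ (finite_range θ).measurableSet _

theorem map_comp_eq_discMeasure {α : Type*} [MeasurableSpace α] (ρ : Measure α) [IsFiniteMeasure ρ]
    (θ : Fin m → EuclideanSpace ℝ (Fin d)) {c : α → Fin m} (hc : Measurable c) :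
    ρ.map (θ ∘ c) = discMeasure (fun j => (ρ (c ⁻¹' {j})).toReal) θ := by
  rw [discMeasure_eq_map, ← Measure.map_map (measurable_of_countable θ) hc]
  conv_lhs => rw [← Measure.sum_smul_dirac (ρ.map c), Measure.sum_fintype]
  simp_rw [Measure.map_apply hc (measurableSet_singleton _),
    ENNReal.ofReal_toReal (measure_ne_top _ _)]

end DiscreteMeasure

theorem stmt1_general {d m : ℕ}
    (ρ : Measure (EuclideanSpace ℝ (Fin d))) [IsProbabilityMeasure ρ]
    (hmom : Integrable (fun x => ‖x‖ ^ 2) ρ)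
    (θ : Fin m → EuclideanSpace ℝ (Fin d))
    (c : EuclideanSpace ℝ (Fin d) → Fin m) (hc : Measurable c)
    (hnear : ∀ x, ∀ k, ‖θ (c x) - x‖ ≤ ‖θ k - x‖) :
    W2sq (discMeasure (fun j => (ρ (c ⁻¹' {j})).toReal) θ) ρ
      = ∫ x, ⨅ j, ‖θ j - x‖ ^ 2 ∂ρ := by
  have hρ : MemLp id 2 ρ := (memLp_two_iff_integrable_sq_norm aestronglyMeasurable_id).2 hmom
  have hT : Measurable fun x => (θ (c x), x) :=
    ((measurable_of_countable θ).comp hc).prodMk measurable_id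
  refine IsLeast.csInf_eq ⟨⟨ρ.map fun x => (θ (c x), x), ?_, ?_, ?_⟩, ?_⟩
  · rw [Measure.map_map measurable_fst hT]
    exact map_comp_eq_discMeasure ρ θ hc
  · rw [Measure.map_map measurable_snd hT]
    exact Measure.map_id
  · rw [integral_map hT.aemeasurable (by fun_prop)]
    exact integral_congr_ae (ae_of_all _ fun x => minSqDist_eq_of_forall_le (hnear x))
  · rintro _ ⟨γ, hfst, hsnd, rfl⟩
    refine integral_minSqDist_le_integral_norm_sub_sq θ hρ hsnd ?_
    exact ae_of_ae_map measurable_fst.aemeasurable (hfst ▸ ae_mem_range_discMeasure _ θ)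

/-- Nearest-neighbor (Voronoi) weights achieve the optimal weights:
    with `c` a measurable tie-breaking rule assigning each `x` to exactly one nearest
    centroid, and `v_j = ρ(c⁻¹{j})`, one has
    `W₂²(∑ v_j δ_{θ_j}, ρ) = E_{X∼ρ}[min_j ‖θ_j − X‖²]`. -/
theorem stmt1 {d m : ℕ} (hm : 0 < m)
    (ρ : Measure (EuclideanSpace ℝ (Fin d))) [IsProbabilityMeasure ρ]
    (hmom : Integrable (fun x => ‖x‖ ^ 2) ρ)
    (θ : Fin m → EuclideanSpace ℝ (Fin d)) (hθ : Function.Injective θ)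
    (c : EuclideanSpace ℝ (Fin d) → Fin m) (hc : Measurable c)
    (hnear : ∀ x, ∀ k, ‖θ (c x) - x‖ ≤ ‖θ k - x‖) :
    W2sq (discMeasure (fun j => (ρ (c ⁻¹' {j})).toReal) θ) ρ
      = ∫ x, ⨅ j, ‖θ j - x‖ ^ 2 ∂ρ :=
  stmt1_general ρ hmom θ c hc hnear
end

section
/- Let F : ℝ^d → ℝ be continuously differentiable satisfying ⟨θ − θ₀, ∇F(θ)⟩ ≥ λ‖θ − θ₀‖² − c‖θ − θ₀‖ for all θ in the ball B(θ₀, r), where λ, c, r > 0 with c/λ ≤ r/2. Consider gradient descent θ(t+1) = θ(t) − ε ∇F(θ(t)) with step size ε > 0. If ‖∇F(θ)‖ ≤ G on B(θ₀, r), ‖θ(0) − θ₀‖ ≤ r/2, and ε ≤ min(λ r²/(4G²), 1/(2λ)), then ‖θ(t) − θ₀‖ ≤ r for all t ≥ 0. -/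
open scoped RealInnerProductSpace

/-- Stability of gradient descent under a one-point-strongly-monotone gradient field:
    if `⟨θ−θ₀, ∇F(θ)⟩ ≥ λ‖θ−θ₀‖² − c‖θ−θ₀‖` on `B(θ₀,r)` with `c/λ ≤ r/2`,
    `‖∇F‖ ≤ G` on the ball, `‖θ(0)−θ₀‖ ≤ r/2`, and
    `ε ≤ min(λr²/(4G²), 1/(2λ))`, then the iterates stay in `B(θ₀, r)`. -/
theorem stmt6 {d : ℕ} (F : EuclideanSpace ℝ (Fin d) → ℝ)
    (g : EuclideanSpace ℝ (Fin d) → EuclideanSpace ℝ (Fin d))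
    (θ₀ : EuclideanSpace ℝ (Fin d)) (lam c r ε G : ℝ)
    (hF : ContDiff ℝ 1 F)
    (hg : ∀ x, HasGradientAt F (g x) x)
    (hlam : 0 < lam) (hc : 0 < c) (hr : 0 < r) (hcr : c / lam ≤ r / 2)
    (hmono : ∀ θ, ‖θ - θ₀‖ ≤ r →
      lam * ‖θ - θ₀‖ ^ 2 - c * ‖θ - θ₀‖ ≤ ⟪θ - θ₀, g θ⟫)
    (hG : ∀ θ, ‖θ - θ₀‖ ≤ r → ‖g θ‖ ≤ G)
    (θ : ℕ → EuclideanSpace ℝ (Fin d))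
    (hupd : ∀ t, θ (t + 1) = θ t - ε • g (θ t))
    (hinit : ‖θ 0 - θ₀‖ ≤ r / 2)
    (hε : 0 < ε)
    (hεb : ε ≤ min (lam * r ^ 2 / (4 * G ^ 2)) (1 / (2 * lam))) :
    ∀ t, ‖θ t - θ₀‖ ≤ r := by

  have hG0 : 0 < G := by
    have h0 : ‖θ₀ - θ₀‖ ≤ r := by simp [hr.le]
    have hGnn : (0:ℝ) ≤ G := le_trans (norm_nonneg _) (hG θ₀ h0)
    rcases hGnn.lt_or_eq with h | h
    · exact h
    · exfalso
      have h1 := le_trans hεb (min_le_left _ _)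
      rw [← h] at h1
      simp at h1
      linarith
  have hε1 : ε * G ^ 2 ≤ lam * r ^ 2 / 4 := by
    have h1 := le_trans hεb (min_le_left _ _)
    have h4 : (0:ℝ) < 4 * G ^ 2 := by positivity
    rw [le_div_iff₀ h4] at h1
    nlinarith
  have hε2 : 2 * ε * lam ≤ 1 := by
    have h1 := le_trans hεb (min_le_right _ _)
    have h2 : (0:ℝ) < 2 * lam := by linarith
    rw [le_div_iff₀ h2] at h1
    linarith
  have hc' : c ≤ lam * r / 2 := by
    rw [div_le_iff₀ hlam] at hcr
    nlinarith
  intro t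
  induction t with
  | zero => linarith
  | succ t ih =>
    have key : ‖θ (t+1) - θ₀‖ ^ 2 ≤ r ^ 2 := by
      have hexp : θ (t+1) - θ₀ = (θ t - θ₀) - ε • g (θ t) := by
        rw [hupd]; abel
      rw [hexp, norm_sub_sq_real, inner_smul_right, norm_smul]
      simp only [Real.norm_eq_abs, abs_of_pos hε]
      have hmono' := hmono (θ t) ih
      have hGt := hG (θ t) ih
      have hgn : (0:ℝ) ≤ ‖g (θ t)‖ := norm_nonneg _
      have hxn : (0:ℝ) ≤ ‖θ t - θ₀‖ := norm_nonneg _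
      have hx2 : ‖θ t - θ₀‖ ^ 2 ≤ r ^ 2 := by nlinarith
      nlinarith [mul_le_mul_of_nonneg_left hmono' (by linarith : (0:ℝ) ≤ 2*ε),
        mul_le_mul_of_nonneg_left (mul_le_mul hGt hGt hgn hG0.le) (sq_nonneg ε),
        mul_le_mul_of_nonneg_left hε1 hε.le,
        mul_nonneg (by linarith : (0:ℝ) ≤ 1 - 2*ε*lam) (by linarith : (0:ℝ) ≤ r^2 - ‖θ t - θ₀‖^2),
        mul_le_mul_of_nonneg_left ih (by positivity : (0:ℝ) ≤ 2*ε*c),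
        mul_nonneg (mul_pos hε hlam).le (sq_nonneg r)]
    nlinarith [norm_nonneg (θ (t+1) - θ₀)]
end
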